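/- For any Krom-Horn program K and arbitrary answer set programs P and R, composition is associative in the first argument: K ∘ (P ∘ R) = (K ∘ P) ∘ R. -/
import Mathlib


open Classical Finset

/-- A rule of an answer set program: a head atom, a set of positive body atoms,
and a set of negated body atoms. -/
structure Rule (α : Type*) where
  head : α
  pos : Finset α
  neg : Finset α
deriving DecidableEq

instance {α : Type*} [DecidableEq α] [Fintype α] : Fintype (Rule α) :=
  Fintype.ofEquiv (α × Finset α × Finset α)
    { toFun := fun x => ⟨x.1, x.2.1, x.2.2⟩
      invFun := fun r => (r.head, r.pos, r.neg)
      left_inv := fun _ => rfl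
      right_inv := fun _ => rfl }

variable {α : Type*} [Fintype α] [DecidableEq α]

/-- Program-level negation (the tf/∨/De Morgan construction):
for each head atom `a`, either no rule of `R` has head `a` (then the fact `a` is produced),
or one negated literal is chosen from the body of each rule of `R` with head `a`
(De Morgan + distributivity); heads of facts of `R` are dropped (their body `{t}` negates to `f`). -/
noncomputable def notProg {α : Type*} [Fintype α] [DecidableEq α]
    (R : Finset (Rule α)) : Finset (Rule α) :=
  Finset.univ.filter (fun t =>
    ((∀ s ∈ R, s.head ≠ t.head) ∧ t.pos = ∅ ∧ t.neg = ∅) ∨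
    ((∃ s ∈ R, s.head = t.head) ∧
      ∃ c : Rule α → α ⊕ α,
        (∀ s ∈ R, s.head = t.head →
          Sum.elim (fun b => b ∈ s.pos) (fun b => b ∈ s.neg) (c s)) ∧
        t.pos.image Sum.inl ∪ t.neg.image Sum.inr =
          (R.filter (fun s => s.head = t.head)).image (fun s => Sum.swap (c s))))

/-- Sequential composition of answer set programs. -/
noncomputable def comp {α : Type*} [Fintype α] [DecidableEq α]
    (P R : Finset (Rule α)) : Finset (Rule α) :=
  Finset.univ.filter (fun t => ∃ r ∈ P, ∃ S N : Finset (Rule α),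
    S ⊆ R ∧ N ⊆ notProg R ∧
    S.card = r.pos.card ∧ N.card = r.neg.card ∧
    S.image Rule.head = r.pos ∧ N.image Rule.head = r.neg ∧
    t.head = r.head ∧
    t.pos = (S ∪ N).sup Rule.pos ∧
    t.neg = (S ∪ N).sup Rule.neg)

/-- The unit program `1_A = {a ← a : a ∈ A}`. -/
def unitP (α : Type*) [Fintype α] [DecidableEq α] : Finset (Rule α) :=
  Finset.univ.image (fun a => (⟨a, {a}, ∅⟩ : Rule α))

/-- An interpretation viewed as a fact program. -/
def interp {α : Type*} [Fintype α] [DecidableEq α] (I : Finset α) : Finset (Rule α) :=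
  I.image (fun a => (⟨a, ∅, ∅⟩ : Rule α))

/-- The facts (rules with empty body) of a program. -/
noncomputable def factsOf {α : Type*} [Fintype α] [DecidableEq α]
    (P : Finset (Rule α)) : Finset (Rule α) :=
  P.filter (fun r => r.pos = ∅ ∧ r.neg = ∅)

/-- The van Emden–Kowalski immediate consequence operator. -/
noncomputable def TP {α : Type*} [Fintype α] [DecidableEq α]
    (P : Finset (Rule α)) (I : Finset α) : Finset α :=
  (P.filter (fun r => r.pos ⊆ I ∧ Disjoint r.neg I)).image Rule.head

/-- A Krom-Horn program: all rules are Horn with at most one body atom. -/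
def isKromHorn {α : Type*} [Fintype α] [DecidableEq α] (K : Finset (Rule α)) : Prop :=
  ∀ r ∈ K, r.neg = ∅ ∧ r.pos.card ≤ 1

lemma mem_comp {α : Type*} [Fintype α] [DecidableEq α]
    (P R : Finset (Rule α)) (t : Rule α) :
    t ∈ comp P R ↔ ∃ r ∈ P, ∃ S N : Finset (Rule α),
      S ⊆ R ∧ N ⊆ notProg R ∧
      S.card = r.pos.card ∧ N.card = r.neg.card ∧
      S.image Rule.head = r.pos ∧ N.image Rule.head = r.neg ∧
      t.head = r.head ∧
      t.pos = (S ∪ N).sup Rule.pos ∧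
      t.neg = (S ∪ N).sup Rule.neg := by
  simp [comp]

lemma mem_comp_krom {α : Type*} [Fintype α] [DecidableEq α]
    {K : Finset (Rule α)} (hK : isKromHorn K) (Q : Finset (Rule α)) (t : Rule α) :
    t ∈ comp K Q ↔
      (∃ r ∈ K, r.pos = ∅ ∧ t = ⟨r.head, ∅, ∅⟩) ∨
      (∃ r ∈ K, ∃ s ∈ Q, r.pos = {s.head} ∧ t = ⟨r.head, s.pos, s.neg⟩) := by
  rw [mem_comp]
  constructor
  · rintro ⟨r, hr, S, N, hS, hN, hSc, hNc, hSi, hNi, hh, hp, hn⟩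
    obtain ⟨hneg, hle⟩ := hK r hr
    rw [hneg, Finset.card_empty] at hNc
    obtain rfl : N = ∅ := Finset.card_eq_zero.mp hNc
    by_cases hre : r.pos = ∅
    · rw [hre, Finset.card_empty] at hSc
      obtain rfl : S = ∅ := Finset.card_eq_zero.mp hSc
      left
      refine ⟨r, hr, hre, ?_⟩
      obtain ⟨th, tp, tn⟩ := t
      simp only at hh hp hn
      simp [hh, hp, hn]
    · have h1 : r.pos.card = 1 := by
        refine le_antisymm hle ?_
        exact Finset.card_pos.mpr (Finset.nonempty_iff_ne_empty.mpr hre)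
      rw [h1] at hSc
      obtain ⟨s, rfl⟩ := Finset.card_eq_one.mp hSc
      right
      refine ⟨r, hr, s, hS (Finset.mem_singleton_self s), ?_, ?_⟩
      · rw [← hSi]; simp
      · obtain ⟨th, tp, tn⟩ := t
        simp only at hh hp hn
        simp only [Finset.union_empty, Finset.sup_singleton] at hp hn
        simp [hh, hp, hn]
  · rintro (⟨r, hr, hre, rfl⟩ | ⟨r, hr, s, hs, hre, rfl⟩)
    · refine ⟨r, hr, ∅, ∅, ?_⟩
      simp [hre, (hK r hr).1]
    · refine ⟨r, hr, {s}, ∅, ?_⟩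
      simp [hre, (hK r hr).1, hs]

/-- composition is associative when the first factor is Krom-Horn. -/
theorem kromHorn_assoc {α : Type*} [Fintype α] [DecidableEq α]
    (K P R : Finset (Rule α)) (hK : isKromHorn K) :
    comp K (comp P R) = comp (comp K P) R := by
  ext t
  rw [mem_comp_krom hK, mem_comp]
  constructor
  · rintro (⟨r, hr, hre, rfl⟩ | ⟨r, hr, q, hq, hre, rfl⟩)
    · refine ⟨⟨r.head, ∅, ∅⟩, ?_, ∅, ∅, ?_⟩
      · rw [mem_comp_krom hK]
        exact Or.inl ⟨r, hr, hre, rfl⟩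
      · simp
    · rw [mem_comp] at hq
      obtain ⟨p, hp, S, N, hS, hN, hSc, hNc, hSi, hNi, hh, hpp, hpn⟩ := hq
      refine ⟨⟨r.head, p.pos, p.neg⟩, ?_, S, N, hS, hN, ?_, ?_, hSi, hNi, rfl, ?_, ?_⟩
      · rw [mem_comp_krom hK]
        refine Or.inr ⟨r, hr, p, hp, ?_, rfl⟩
        rw [hre, hh]
      · exact hSc
      · exact hNc
      · exact hpp
      · exact hpn
  · rintro ⟨r', hr', S, N, hS, hN, hSc, hNc, hSi, hNi, hh, htp, htn⟩
    rw [mem_comp_krom hK] at hr'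
    rcases hr' with ⟨r, hr, hre, rfl⟩ | ⟨r, hr, p, hp, hre, rfl⟩
    · left
      refine ⟨r, hr, hre, ?_⟩
      simp only at hSc hNc
      rw [Finset.card_empty] at hSc hNc
      obtain rfl : S = ∅ := Finset.card_eq_zero.mp hSc
      obtain rfl : N = ∅ := Finset.card_eq_zero.mp hNc
      obtain ⟨th, tp, tn⟩ := t
      simp only at hh htp htn
      simp [hh, htp, htn]
    · right
      refine ⟨r, hr, ⟨p.head, t.pos, t.neg⟩, ?_, ?_, ?_⟩
      · rw [mem_comp]
        exact ⟨p, hp, S, N, hS, hN, hSc, hNc, hSi, hNi, rfl, htp, htn⟩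
      · exact hre
      · obtain ⟨th, tp, tn⟩ := t
        simp only at hh
        simp [hh]
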